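/- Let A_y ≥ A_z > 0 and λ_y, λ_z > 0 satisfy λ_y A_z ≤ λ_z A_y, with at least one of these two inequalities strict, and let K(x) = (A_y x + λ_y) ln(A_y x + λ_y) − (A_z x + λ_z) ln(A_z x + λ_z). If α* ∈ [0,1] satisfies K'(α*) = K(1) − K(0), then for every α ∈ [0,1] one has α K(1) + (1 − α) K(0) − K(α) ≤ α* K(1) + (1 − α*) K(0) − K(α*). -/

import Mathlib

/-!
The objective is `α ↦ (affine in α) - K α`, so it suffices that `K` is convex on `[0, ∞)`: the
tangent line of `K` at `α*` then has slope `K 1 - K 0` and lies below `K`, which is exactly the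
claimed inequality. Convexity comes from
`K'' x = A_y² / (A_y x + λ_y) - A_z² / (A_z x + λ_z) ≥ 0`, and the degradedness conditions give
`A_z² λ_y ≤ A_y A_z λ_z ≤ A_y² λ_z`.
-/

open Real Set

theorem ConvexOn.add_mul_sub_le_of_hasDerivAt {S : Set ℝ} {f : ℝ → ℝ} {f' x y : ℝ}
    (hf : ConvexOn ℝ S f) (hx : x ∈ S) (hy : y ∈ S) (hfx : HasDerivAt f f' x) :
    f x + f' * (y - x) ≤ f y := by
  rcases lt_trichotomy x y with hxy | rfl | hyx
  · have hslope := hf.le_slope_of_hasDerivAt hx hy hxy hfx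
    rw [slope_def_field, le_div_iff₀ (sub_pos.2 hxy)] at hslope
    linarith
  · simp
  · have hslope := hf.slope_le_of_hasDerivAt hy hx hyx hfx
    rw [slope_def_field, div_le_iff₀ (sub_pos.2 hyx)] at hslope
    linarith

theorem hasDerivAt_affine_mul_log {A l x : ℝ} (h : A * x + l ≠ 0) :
    HasDerivAt (fun x => (A * x + l) * log (A * x + l)) (A * (log (A * x + l) + 1)) x := by
  have hlin : HasDerivAt (fun x => A * x + l) A x := by
    simpa using ((hasDerivAt_id x).const_mul A).add_const l
  refine ((hasDerivAt_mul_log h).comp x hlin).congr_deriv ?_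
  ring

theorem hasDerivAt_affine_log {A l x : ℝ} (h : A * x + l ≠ 0) :
    HasDerivAt (fun x => log (A * x + l)) (A / (A * x + l)) x := by
  have hlin : HasDerivAt (fun x => A * x + l) A x := by
    simpa using ((hasDerivAt_id x).const_mul A).add_const l
  refine ((hasDerivAt_log h).comp x hlin).congr_deriv ?_
  ring

section Degraded

variable {Ay Az ly lz : ℝ}

theorem sq_div_affine_le_sq_div_affine (hAz : 0 < Az) (hAyz : Az ≤ Ay) (hly : 0 < ly)
    (hlz : 0 < lz) (hdeg : ly * Az ≤ lz * Ay) {x : ℝ} (hx : 0 ≤ x) :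
    Az ^ 2 / (Az * x + lz) ≤ Ay ^ 2 / (Ay * x + ly) := by
  have hAy : 0 < Ay := hAz.trans_le hAyz
  rw [div_le_div_iff₀ (by positivity) (by positivity)]
  have hconst : Az ^ 2 * ly ≤ Ay ^ 2 * lz := by
    nlinarith [mul_le_mul_of_nonneg_left hdeg hAy.le,
      mul_le_mul_of_nonneg_right hAyz (mul_pos hAz hly).le]
  nlinarith [mul_nonneg (mul_nonneg (mul_pos hAy hAz).le hx) (sub_nonneg.2 hAyz)]

theorem convexOn_Ici_affine_mul_log_sub (hAz : 0 < Az) (hAyz : Az ≤ Ay) (hly : 0 < ly)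
    (hlz : 0 < lz) (hdeg : ly * Az ≤ lz * Ay) :
    ConvexOn ℝ (Ici 0) (fun x => (Ay * x + ly) * log (Ay * x + ly)
      - (Az * x + lz) * log (Az * x + lz)) := by
  have hAy : 0 < Ay := hAz.trans_le hAyz
  have hy : ∀ x ∈ Ici (0 : ℝ), Ay * x + ly ≠ 0 := fun x (hx : 0 ≤ x) => by positivity
  have hz : ∀ x ∈ Ici (0 : ℝ), Az * x + lz ≠ 0 := fun x (hx : 0 ≤ x) => by positivity
  have hK : ∀ x ∈ Ici (0 : ℝ), HasDerivAt (fun x => (Ay * x + ly) * log (Ay * x + ly)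
      - (Az * x + lz) * log (Az * x + lz))
      (Ay * (log (Ay * x + ly) + 1) - Az * (log (Az * x + lz) + 1)) x := fun x hx =>
    (hasDerivAt_affine_mul_log (hy x hx)).sub (hasDerivAt_affine_mul_log (hz x hx))
  have hK' : ∀ x ∈ Ici (0 : ℝ),
      HasDerivAt (fun x => Ay * (log (Ay * x + ly) + 1) - Az * (log (Az * x + lz) + 1))
        (Ay ^ 2 / (Ay * x + ly) - Az ^ 2 / (Az * x + lz)) x := fun x hx => by
    refine ((((hasDerivAt_affine_log (hy x hx)).add_const 1).const_mul Ay).sub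
      (((hasDerivAt_affine_log (hz x hx)).add_const 1).const_mul Az)).congr_deriv ?_
    ring
  refine convexOn_of_hasDerivWithinAt2_nonneg (convex_Ici 0)
    (f' := fun x => Ay * (log (Ay * x + ly) + 1) - Az * (log (Az * x + lz) + 1))
    (f'' := fun x => Ay ^ 2 / (Ay * x + ly) - Az ^ 2 / (Az * x + lz))
    (fun x hx => (hK x hx).continuousAt.continuousWithinAt) ?_ ?_ ?_ <;> rw [interior_Ici]
  · exact fun x hx => (hK x (Ioi_subset_Ici_self hx)).hasDerivWithinAt
  · exact fun x hx => (hK' x (Ioi_subset_Ici_self hx)).hasDerivWithinAt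
  · exact fun x hx => sub_nonneg.2 (sq_div_affine_le_sq_div_affine hAz hAyz hly hlz hdeg hx.le)

end Degraded

theorem poisson_wiretap_foc_is_maximizer_general
    (Ay Az ly lz : ℝ) (hAz : 0 < Az) (hAyz : Az ≤ Ay)
    (hly : 0 < ly) (hlz : 0 < lz) (hdeg : ly * Az ≤ lz * Ay)
    (K : ℝ → ℝ)
    (hK : K = fun x => (Ay * x + ly) * Real.log (Ay * x + ly)
        - (Az * x + lz) * Real.log (Az * x + lz))
    (αs : ℝ) (hαs : αs ∈ Set.Icc (0:ℝ) 1)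
    (hfoc : deriv K αs = K 1 - K 0) :
    ∀ α ∈ Set.Icc (0:ℝ) 1,
      α * K 1 + (1 - α) * K 0 - K α ≤ αs * K 1 + (1 - αs) * K 0 - K αs := by
  intro α hα
  have hconvex : ConvexOn ℝ (Ici 0) K :=
    hK ▸ convexOn_Ici_affine_mul_log_sub hAz hAyz hly hlz hdeg
  have hdiff : DifferentiableAt ℝ K αs := by
    have hAy : 0 < Ay := hAz.trans_le hAyz
    have hαs0 : 0 ≤ αs := hαs.1
    rw [hK]
    exact ((hasDerivAt_affine_mul_log (by positivity)).sub
      (hasDerivAt_affine_mul_log (by positivity))).differentiableAt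
  have htangent := hconvex.add_mul_sub_le_of_hasDerivAt hαs.1 hα.1 (hfoc ▸ hdiff.hasDerivAt)
  linear_combination htangent

/-- Under the degradedness conditions (with at least one strict), any `α* ∈ [0,1]`
satisfying the first-order condition `K'(α*) = K(1) − K(0)` globally maximizes
`α ↦ α K(1) + (1 − α) K(0) − K(α)` over `[0,1]`. -/
theorem poisson_wiretap_foc_is_maximizer
    (Ay Az ly lz : ℝ) (hAz : 0 < Az) (hAyz : Az ≤ Ay)
    (hly : 0 < ly) (hlz : 0 < lz) (hdeg : ly * Az ≤ lz * Ay)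
    (hstrict : Az < Ay ∨ ly * Az < lz * Ay)
    (K : ℝ → ℝ)
    (hK : K = fun x => (Ay * x + ly) * Real.log (Ay * x + ly)
        - (Az * x + lz) * Real.log (Az * x + lz))
    (αs : ℝ) (hαs : αs ∈ Set.Icc (0:ℝ) 1)
    (hfoc : deriv K αs = K 1 - K 0) :
    ∀ α ∈ Set.Icc (0:ℝ) 1,
      α * K 1 + (1 - α) * K 0 - K α ≤ αs * K 1 + (1 - αs) * K 0 - K αs :=
  poisson_wiretap_foc_is_maximizer_general Ay Az ly lz hAz hAyz hly hlz hdeg K hK αs hαs hfoc
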